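/- Let R = ℚ[T]/(T^{n+1}) with t the image of T, let k ≥ 0 be a natural number, and let ψ : R → R be any ℚ-algebra homomorphism satisfying ψ(t) = 1 − (1−t)^k. Set x := −(t + (1/2)t² + ⋯ + (1/n)tⁿ) ∈ R. Then for every natural number i ≥ 1 one has ψ(xⁱ) = kⁱ·xⁱ, i.e. xⁱ is an eigenvector of the k-th Adams operator on R with eigenvalue kⁱ. -/

import Mathlib

/-!
As `ψ` is multiplicative it suffices to show `ψ x = k x`; heuristically `x = log (1 - t)` and
`ψ (1 - t) = (1 - t)^k`. Exactly: with `L = X + X²/2 + ⋯ + Xⁿ/n`, the polynomial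
`D = L(1 - (1 - X)^k) - k L` is divisible by `X^(n+1)`, because `D(0) = 0` and
`(X - 1) L' = Xⁿ - 1` gives `(X - 1) D' = k((1 - (1 - X)^k)ⁿ - Xⁿ)`, which is divisible by `Xⁿ`,
while `X - 1` is coprime to `X`.
-/

/-- The ring `R = ℚ[T]/(T^(n+1))`. -/
abbrev PolyQuot (n : ℕ) : Type :=
  Polynomial ℚ ⧸ Ideal.span {(Polynomial.X : Polynomial ℚ) ^ (n + 1)}

/-- The image `t` of `T` in `ℚ[T]/(T^(n+1))`. -/
noncomputable def tgen (n : ℕ) : PolyQuot n :=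
  Ideal.Quotient.mk _ Polynomial.X

open Polynomial Finset

namespace Polynomial

variable {R K : Type*} [CommRing R] [Field K]

theorem X_pow_succ_dvd_of_eval_zero_of_dvd_derivative [CharZero K] {p : K[X]} {n : ℕ}
    (h0 : p.eval 0 = 0) (hd : X ^ n ∣ derivative p) : X ^ (n + 1) ∣ p := by
  rw [X_pow_dvd_iff] at hd ⊢
  rintro (_ | m) hm
  · rwa [coeff_zero_eq_eval_zero]
  · have := hd m (by omega)
    rw [coeff_derivative, mul_eq_zero] at this
    exact this.resolve_right (Nat.cast_add_one_ne_zero m)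

theorem X_sub_one_mul_derivative_one_sub_one_sub_X_pow (k : ℕ) :
    (X - 1) * derivative (1 - (1 - X) ^ k : R[X]) = C (k : R) * ((1 - (1 - X) ^ k) - 1) := by
  rcases k with _ | k
  · simp
  · rw [derivative_sub, derivative_one, derivative_pow, derivative_sub, derivative_one,
      derivative_X, Nat.add_sub_cancel, pow_succ]
    ring

variable (K) in
/-- The truncation `X + X²/2 + ⋯ + Xⁿ/n` of `-log (1 - X)`. -/
noncomputable def logTrunc (n : ℕ) : K[X] :=
  ∑ j ∈ Icc 1 n, (j : K)⁻¹ • X ^ j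

theorem eval_zero_logTrunc (n : ℕ) : (logTrunc K n).eval 0 = 0 := by
  simp only [logTrunc, eval_finsetSum, eval_smul, eval_pow, eval_X]
  exact sum_eq_zero fun j hj => by simp [zero_pow (by simp at hj; omega : j ≠ 0)]

theorem derivative_logTrunc [CharZero K] (n : ℕ) :
    derivative (logTrunc K n) = ∑ j ∈ range n, X ^ j := by
  induction n with
  | zero => simp [logTrunc]
  | succ n ih =>
    rw [logTrunc, sum_Icc_succ_top (by omega), derivative_add, ← logTrunc, ih, sum_range_succ,
      derivative_smul, derivative_X_pow, Nat.add_sub_cancel, ← smul_mul_assoc, smul_C, smul_eq_mul,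
      inv_mul_cancel₀ (Nat.cast_ne_zero.mpr n.succ_ne_zero), C_1, one_mul]

theorem X_pow_succ_dvd_logTrunc_comp_sub [CharZero K] (n k : ℕ) :
    X ^ (n + 1) ∣ (logTrunc K n).comp (1 - (1 - X) ^ k) - C (k : K) * logTrunc K n := by
  have hXg : X ∣ (1 - (1 - X) ^ k : K[X]) := by
    have h := sub_dvd_pow_sub_pow (1 : K[X]) (1 - X) k
    rwa [sub_sub_cancel, one_pow] at h
  have hg := X_sub_one_mul_derivative_one_sub_one_sub_X_pow (R := K) k
  generalize (1 - (1 - X) ^ k : K[X]) = g at hXg hg ⊢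
  set L := logTrunc K n
  have hL : (X - 1) * derivative L = X ^ n - 1 := by
    rw [derivative_logTrunc, mul_comm, geom_sum_mul]
  have hLg : (g - 1) * (derivative L).comp g = g ^ n - 1 := by
    simpa [mul_comp, sub_comp] using congrArg (fun p : K[X] => p.comp g) hL
  have hD : (X - 1) * derivative (L.comp g - C (k : K) * L) = C (k : K) * (g ^ n - X ^ n) := by
    rw [derivative_sub, derivative_comp, derivative_C_mul]
    linear_combination (derivative L).comp g * hg + C (k : K) * hLg - C (k : K) * hL
  have hcop : IsCoprime (X ^ n : K[X]) (X - 1) := IsCoprime.pow_left ⟨1, -1, by ring⟩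
  refine X_pow_succ_dvd_of_eval_zero_of_dvd_derivative ?_ ?_
  · rw [X_dvd_iff, coeff_zero_eq_eval_zero] at hXg
    simp [L, eval_comp, hXg, eval_zero_logTrunc]
  · exact hcop.dvd_of_dvd_mul_left (hD ▸ (dvd_sub (pow_dvd_pow_of_dvd hXg n) dvd_rfl).mul_left _)

theorem aeval_eq_of_X_pow_dvd_sub {A : Type*} [Ring A] [Algebra R A] {t : A} {n : ℕ}
    (ht : t ^ n = 0) {p q : R[X]} (h : X ^ n ∣ p - q) : aeval t p = aeval t q := by
  obtain ⟨c, hc⟩ := h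
  rw [← sub_eq_zero, ← map_sub, hc, map_mul, map_pow, aeval_X, ht, zero_mul]

end Polynomial

theorem adams_eigenvector_pow_general (n : ℕ) (k : ℕ)
    (ψ : PolyQuot n →ₐ[ℚ] PolyQuot n)
    (hψ : ψ (tgen n) = 1 - (1 - tgen n) ^ k)
    (i : ℕ) :
    ψ ((-(∑ j ∈ Finset.Icc 1 n, ((j : ℚ)⁻¹) • (tgen n) ^ j)) ^ i) =
      (k : PolyQuot n) ^ i *
        (-(∑ j ∈ Finset.Icc 1 n, ((j : ℚ)⁻¹) • (tgen n) ^ j)) ^ i := by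
  have ht : tgen n ^ (n + 1) = 0 := by
    rw [tgen, ← map_pow, Ideal.Quotient.mk_singleton_self]
  have hx : ∑ j ∈ Icc 1 n, (j : ℚ)⁻¹ • tgen n ^ j = aeval (tgen n) (logTrunc ℚ n) := by
    simp [logTrunc, map_sum]
  have hψt : ψ (tgen n) = aeval (tgen n) (1 - (1 - X) ^ k : ℚ[X]) := by simp [hψ]
  have hψx : ψ (aeval (tgen n) (logTrunc ℚ n)) = k * aeval (tgen n) (logTrunc ℚ n) := by
    rw [← aeval_algHom_apply, hψt, ← aeval_comp,
      aeval_eq_of_X_pow_dvd_sub ht (X_pow_succ_dvd_logTrunc_comp_sub n k)]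
    simp
  rw [hx, map_pow, map_neg, hψx]
  ring

/-- in `R = ℚ[T]/(T^(n+1))`, if `ψ` is a `ℚ`-algebra endomorphism with
`ψ t = 1 - (1-t)^k` (the `k`-th Adams operator), then for every `i ≥ 1` the power
`xⁱ` of `x = -(t + (1/2)t² + ⋯ + (1/n)tⁿ)` satisfies `ψ (xⁱ) = kⁱ • xⁱ`. -/
theorem adams_eigenvector_pow (n : ℕ) (hn : 1 ≤ n) (k : ℕ)
    (ψ : PolyQuot n →ₐ[ℚ] PolyQuot n)
    (hψ : ψ (tgen n) = 1 - (1 - tgen n) ^ k)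
    (i : ℕ) (hi : 1 ≤ i) :
    ψ ((-(∑ j ∈ Finset.Icc 1 n, ((j : ℚ)⁻¹) • (tgen n) ^ j)) ^ i) =
      (k : PolyQuot n) ^ i *
        (-(∑ j ∈ Finset.Icc 1 n, ((j : ℚ)⁻¹) • (tgen n) ^ j)) ^ i :=
  adams_eigenvector_pow_general n k ψ hψ i
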